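/- For positive integers m and n, the lattice Tam((NE^m)^n) is equal to the m-Tamari lattice on m-ballot paths of height n: the covering relation of Tam((NE^m)^n) coincides with the m-Tamari covering relation (exchanging an east step E that precedes a north step with the portion of the path above the slope-1/m diagonal drawn from the right endpoint of E until it meets the path again). In particular, Tam((NE)^n) is the usual Tamari lattice on ballot paths of height n. -/
import Mathlib


/-- A lattice path on the square grid starting at `(0,0)`:
`true` = north step `N`, `false` = east step `E`. -/
abbrev LPath := List Bool

/-- The x-coordinate of the rightmost point at height `y` lying weakly above `v`,
i.e. the number of east steps of `v` occurring at height at most `y`. -/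
def horizAbs (v : LPath) (y : ℕ) : ℕ :=
  ((List.range v.length).filter
    (fun i => v.getD i true = false ∧ (v.take i).count true ≤ y)).length

/-- The horizontal distance `horiz_v(p)` of the point `p` of `u` reached after `j` steps:
the maximal number of east steps that can be appended at `p` without crossing `v`. -/
def horiz (v u : LPath) (j : ℕ) : ℕ :=
  horizAbs v ((u.take j).count true) - (u.take j).count false

/-- `u` has the same endpoints as `v` (same numbers of north and east steps) and
stays weakly above `v`. -/
def WeaklyAbove (u v : LPath) : Prop :=
  u.count true = v.count true ∧ u.count false = v.count false ∧
  ∀ j : ℕ, (u.take j).count false ≤ horizAbs v ((u.take j).count true)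

/-- The covering relation of `Tam(v)`: the point `p` of `u` after `j` steps is preceded
by an east step and followed by a north step, `k` is the index of the first point `p'`
after `p` with `horiz_v(p') = horiz_v(p)`, and `u'` is obtained from `u` by exchanging
that east step with the subpath of `u` from `p` to `p'`. -/
def TamCovers (v u u' : LPath) : Prop :=
  ∃ j k : ℕ, 0 < j ∧ j < k ∧ k ≤ u.length ∧
    u.getD (j - 1) true = false ∧ u.getD j false = true ∧
    horiz v u k = horiz v u j ∧
    (∀ l : ℕ, j < l → l < k → horiz v u l ≠ horiz v u j) ∧
    u' = u.take (j - 1) ++ (u.drop j).take (k - j) ++ [false] ++ u.drop k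

/-- The order of `Tam(v)`: the reflexive-transitive closure of the covering relation. -/
def TamLe (v : LPath) : LPath → LPath → Prop := Relation.ReflTransGen (TamCovers v)

/-- The underlying set of `Tam(v)`: all paths weakly above `v` with the same endpoints. -/
abbrev TamSet (v : LPath) := {u : LPath // WeaklyAbove u v}

/-- The path `(NE^m)^n`. -/
def vNEm (m n : ℕ) : LPath := (List.replicate n (true :: List.replicate m false)).flatten

/-- The `m`-Tamari covering relation on `m`-ballot paths: exchange an east step `E`
preceding a north step with the portion of the path above the slope-`1/m` diagonal
drawn from the right endpoint of `E` until it first touches the path again (the first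
later point `p'` with `x(p') - x(p) = m ⬝ (y(p') - y(p))`). -/
def MCovers (m : ℕ) (u u' : LPath) : Prop :=
  ∃ j k : ℕ, 0 < j ∧ j < k ∧ k ≤ u.length ∧
    u.getD (j - 1) true = false ∧ u.getD j false = true ∧
    (u.take k).count false - (u.take j).count false
      = m * ((u.take k).count true - (u.take j).count true) ∧
    (∀ l : ℕ, j < l → l < k →
      (u.take l).count false - (u.take j).count false
        ≠ m * ((u.take l).count true - (u.take j).count true)) ∧
    u' = u.take (j - 1) ++ (u.drop j).take (k - j) ++ [false] ++ u.drop k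


lemma horizAbs_false_cons (v : LPath) (y : ℕ) :
    horizAbs (false :: v) y = horizAbs v y + 1 := by
  unfold horizAbs
  rw [← List.countP_eq_length_filter, ← List.countP_eq_length_filter,
    List.length_cons, List.range_succ_eq_map, List.countP_cons, List.countP_map]
  simp [Function.comp_def, Nat.add_comm]

lemma horizAbs_true_cons_zero (v : LPath) :
    horizAbs (true :: v) 0 = 0 := by
  unfold horizAbs
  rw [← List.countP_eq_length_filter,
    List.length_cons, List.range_succ_eq_map, List.countP_cons, List.countP_map]
  simp [Function.comp_def]

lemma horizAbs_true_cons_succ (v : LPath) (y : ℕ) :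
    horizAbs (true :: v) (y + 1) = horizAbs v y := by
  unfold horizAbs
  rw [← List.countP_eq_length_filter, ← List.countP_eq_length_filter,
    List.length_cons, List.range_succ_eq_map, List.countP_cons, List.countP_map]
  simp [Function.comp_def, Nat.succ_le_succ_iff]

lemma vNEm_succ (m n : ℕ) : vNEm m (n + 1) = true :: (List.replicate m false ++ vNEm m n) := by
  simp [vNEm, List.replicate_succ]

lemma horizAbs_rep_append (m : ℕ) (w : LPath) (y : ℕ) :
    horizAbs (List.replicate m false ++ w) y = m + horizAbs w y := by
  induction m with
  | zero => simp
  | succ m ih =>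
    rw [List.replicate_succ, List.cons_append, horizAbs_false_cons, ih]; omega

lemma horizAbs_vNEm (m n y : ℕ) : horizAbs (vNEm m n) y = m * min y n := by
  induction n generalizing y with
  | zero => simp [vNEm, horizAbs]
  | succ n ih =>
    rw [vNEm_succ]
    cases y with
    | zero => simp [horizAbs_true_cons_zero]
    | succ y =>
      rw [horizAbs_true_cons_succ, horizAbs_rep_append, ih]
      have : min (y + 1) (n + 1) = min y n + 1 := by omega
      rw [this]; ring

lemma vNEm_count_true (m n : ℕ) : (vNEm m n).count true = n := by
  induction n with
  | zero => simp [vNEm]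
  | succ n ih => rw [vNEm_succ]; simp [List.count_cons, List.count_append, ih, List.count_replicate]

lemma count_take_mono (u : LPath) (c : Bool) {j k : ℕ} (h : j ≤ k) :
    (u.take j).count c ≤ (u.take k).count c := by
  have e : u.take j = (u.take k).take j := by rw [List.take_take, min_eq_left h]
  rw [e]; exact ((u.take k).take_sublist j).count_le c

lemma count_take_le (u : LPath) (c : Bool) (j : ℕ) : (u.take j).count c ≤ u.count c :=
  (u.take_sublist j).count_le c

lemma key (m n : ℕ) (u : LPath) (hu : WeaklyAbove u (vNEm m n)) {j l : ℕ} (hjl : j ≤ l) :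
    horiz (vNEm m n) u l = horiz (vNEm m n) u j ↔
      (u.take l).count false - (u.take j).count false
        = m * ((u.take l).count true - (u.take j).count true) := by
  obtain ⟨ht, -, hab⟩ := hu
  rw [vNEm_count_true] at ht
  set yj := (u.take j).count true with hyj
  set yl := (u.take l).count true with hyl
  set xj := (u.take j).count false with hxj
  set xl := (u.take l).count false with hxl
  have hyn : yl ≤ n := ht ▸ count_take_le u true l
  have hyn' : yj ≤ n := ht ▸ count_take_le u true j
  have hxle : xj ≤ m * yj := by
    have := hab j; rwa [horizAbs_vNEm, min_eq_left hyn'] at this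
  have hxle' : xl ≤ m * yl := by
    have := hab l; rwa [horizAbs_vNEm, min_eq_left hyn] at this
  have hym : yj ≤ yl := count_take_mono u true hjl
  have hxm : xj ≤ xl := count_take_mono u false hjl
  have hmle : m * yj ≤ m * yl := Nat.mul_le_mul_left m hym
  have hC : m * (yl - yj) + m * yj = m * yl := by
    rw [← Nat.mul_add]; congr 1; omega
  unfold horiz
  rw [horizAbs_vNEm, horizAbs_vNEm, min_eq_left hyn, min_eq_left hyn', ← hxj, ← hxl]
  omega

/-- **Proposition 13.** For positive integers `m` and `n`, the lattice `Tam((NE^m)^n)`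
coincides with the `m`-Tamari lattice on `m`-ballot paths of height `n`: on paths weakly
above `(NE^m)^n`, the covering relation of `Tam((NE^m)^n)` is exactly the `m`-Tamari
covering relation.  In particular (`m = 1`), `Tam((NE)^n)` is the usual Tamari lattice
on ballot paths of height `n`. -/
theorem tam_eq_mTamari (m n : ℕ) (hm : 0 < m) (hn : 0 < n) (u u' : LPath)
    (hu : WeaklyAbove u (vNEm m n)) (hu' : WeaklyAbove u' (vNEm m n)) :
    TamCovers (vNEm m n) u u' ↔ MCovers m u u' := by
  constructor
  · rintro ⟨j, k, h1, h2, h3, h4, h5, h6, h7, h8⟩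
    exact ⟨j, k, h1, h2, h3, h4, h5, (key m n u hu h2.le).mp h6,
      fun l hl1 hl2 hc => h7 l hl1 hl2 ((key m n u hu hl1.le).mpr hc), h8⟩
  · rintro ⟨j, k, h1, h2, h3, h4, h5, h6, h7, h8⟩
    exact ⟨j, k, h1, h2, h3, h4, h5, (key m n u hu h2.le).mpr h6,
      fun l hl1 hl2 hc => h7 l hl1 hl2 ((key m n u hu hl1.le).mp hc), h8⟩
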